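/- Let R be a PVMD with Spec_t(R) Noetherian and let I be a t-ideal of R. If I is a primary ideal which is not prime, then I⁻¹ is not a subring of the quotient field K. -/

import Mathlib

/-!
Common definitions: star operations (`v`- and `t`-closure), `t`-ideals, `t`-invertibility,
PVMDs, overrings, `t`-linked and `t`-flat overrings, localizations inside the quotient
field, Nagata and Kaplansky transforms, endomorphism rings of ideals.
-/

open scoped Classical

namespace PVMDPaper

noncomputable section

section Generic

variable (A : Type*) [CommRing A] (K : Type*) [Field K] [Algebra A K]

/-- The image of an integral ideal of `A` inside the field `K`, as an `A`-submodule of `K`. -/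
def toK (I : Ideal A) : Submodule A K := Submodule.map (Algebra.linearMap A K) I

variable {A K}

/-- The dual `I⁻¹ = (A : I) = {x ∈ K : x I ⊆ A}` of a submodule of `K`. -/
def dual (I : Submodule A K) : Submodule A K := 1 / I

/-- The `v`-closure `I_v = (I⁻¹)⁻¹`. -/
def vOp (I : Submodule A K) : Submodule A K := 1 / (1 / I)

/-- The `t`-closure `I_t`: the union of `J_v` where `J` ranges over the nonzero finitely
generated submodules `J ≤ I` (the union of this directed family is its supremum). -/
def tOp (I : Submodule A K) : Submodule A K :=
  sSup {V | ∃ J : Submodule A K, J ≠ ⊥ ∧ J.FG ∧ J ≤ I ∧ V = vOp J}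

variable (K)

/-- An (integral) ideal `I` of `A` is a `t`-ideal if `I = I_t`. -/
def IsTIdeal (I : Ideal A) : Prop := tOp (toK A K I) = toK A K I

/-- An ideal `I` is `t`-invertible if `(I I⁻¹)_t = A`. -/
def IsTInvertible (I : Ideal A) : Prop := tOp (toK A K I * dual (toK A K I)) = 1

/-- A `t`-maximal ideal: an ideal maximal in the set of proper integral `t`-ideals. -/
def IsTMaximal (M : Ideal A) : Prop :=
  M ≠ ⊤ ∧ IsTIdeal K M ∧ ∀ J : Ideal A, J ≠ ⊤ → IsTIdeal K J → M ≤ J → J = M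

variable (A)

/-- `A` is a Prüfer `v`-multiplication domain: every nonzero finitely generated ideal
is `t`-invertible. -/
def IsPVMD : Prop := ∀ I : Ideal A, I ≠ ⊥ → I.FG → IsTInvertible K I

/-- `Spec_t(A)` is Noetherian: the ascending chain condition on radical `t`-ideals. -/
def TSpecNoetherian : Prop :=
  ∀ f : ℕ →o Ideal A, (∀ n, IsTIdeal K (f n) ∧ (f n).radical = f n) →
    ∃ n, ∀ m, n ≤ m → f m = f n

variable {A K}

/-- A submodule of `K` is a subring of `K` iff it contains `1` and is closed under
multiplication (being an additive subgroup already). -/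
def IsSubringOf (S : Submodule A K) : Prop :=
  (1 : K) ∈ S ∧ ∀ x ∈ S, ∀ y ∈ S, x * y ∈ S

variable (K)

/-- The localization `A_P = {a/s : a ∈ A, s ∈ A ∖ P}` viewed as a subset of `K`. -/
def loc (P : Ideal A) : Set K :=
  {x | ∃ a s : A, s ∉ P ∧ x * algebraMap A K s = algebraMap A K a}

/-- The set `J A_P = {a/s : a ∈ J, s ∈ A ∖ P} ⊆ K`. -/
def locIdealAt (J P : Ideal A) : Set K :=
  {x | ∃ a ∈ J, ∃ s : A, s ∉ P ∧ x * algebraMap A K s = algebraMap A K a}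

/-- `Z(A, I)`: the set of zero divisors on `A/I`. -/
def ZSet (I : Ideal A) : Set A := {x | ∃ a : A, a ∉ I ∧ x * a ∈ I}

/-- `Q` is a maximal prime ideal of `Z(A,I)`: a prime contained in `Z(A,I)`, maximal
(under inclusion) among the primes contained in `Z(A,I)`. -/
def MaxPrimeOfZ (I Q : Ideal A) : Prop :=
  Q.IsPrime ∧ (Q : Set A) ⊆ ZSet I ∧
    ∀ Q' : Ideal A, Q'.IsPrime → (Q' : Set A) ⊆ ZSet I → Q ≤ Q' → Q' = Q

end Generic

section Overring

variable {R : Type*} [CommRing R] [IsDomain R]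
variable {K : Type*} [Field K] [Algebra R K] [IsFractionRing R K]

/-- The extension `IT` of an ideal `I` of `R` to an overring `T`, as a `T`-submodule of `K`. -/
def extendI (I : Ideal R) (T : Subalgebra R K) : Submodule T K :=
  Submodule.span T (algebraMap R K '' (I : Set R))

/-- The extension `IT` of an `R`-submodule `I` of `K` to an overring `T`. -/
def extendS (I : Submodule R K) (T : Subalgebra R K) : Submodule T K :=
  Submodule.span T (I : Set K)

/-- An overring `T` of `R` is `t`-linked over `R` if `(IT)⁻¹ = T` for each finitely
generated ideal `I` of `R` with `I⁻¹ = R`. -/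
def IsTLinked (T : Subalgebra R K) : Prop :=
  ∀ I : Ideal R, I.FG → dual (toK R K I) = 1 → dual (extendI I T) = 1

/-- An overring `T` of `R` is `t`-flat over `R` if `T_M = R_{M ∩ R}` for each
`t`-maximal ideal `M` of `T`. -/
def IsTFlat (T : Subalgebra R K) : Prop :=
  ∀ M : Ideal T, IsTMaximal K M → loc K M = loc K (M.comap (algebraMap R T))

variable (R K)

/-- `R` is a `tQR`-domain: a PVMD all of whose `t`-linked overrings are localizations
of `R` at multiplicative sets. -/
def IsTQR : Prop :=
  IsPVMD R K ∧ ∀ T : Subalgebra R K, IsTLinked T → ∃ S : Submonoid R,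
    (T : Set K) = {x | ∃ a : R, ∃ s ∈ S, x * algebraMap R K s = algebraMap R K a}

variable {R K}
variable (K)

/-- The endomorphism ring `(I : I) = {x ∈ K : x I ⊆ I}` of an ideal `I`, as an
overring of `R`. -/
def endoRing (I : Ideal R) : Subalgebra R K where
  carrier := {x : K | ∀ y ∈ toK R K I, x * y ∈ toK R K I}
  mul_mem' := by
    intro a b ha hb y hy
    rw [mul_assoc]
    exact ha _ (hb _ hy)
  one_mem' := by
    intro y hy
    rwa [one_mul]
  add_mem' := by
    intro a b ha hb y hy
    rw [add_mul]
    exact Submodule.add_mem _ (ha y hy) (hb y hy)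
  zero_mem' := by
    intro y hy
    rw [zero_mul]
    exact Submodule.zero_mem _
  algebraMap_mem' := by
    intro r y hy
    rw [← Algebra.smul_def]
    exact Submodule.smul_mem _ r hy

set_option synthInstance.maxHeartbeats 400000 in
/-- The ideal `I`, viewed as an ideal of its endomorphism ring `(I : I)`. -/
def idealInEndo (I : Ideal R) : Ideal (endoRing K I) where
  carrier := {x | (x : K) ∈ toK R K I}
  add_mem' := by
    intro a b ha hb
    simp only [Set.mem_setOf_eq] at *
    rw [AddMemClass.coe_add]
    exact Submodule.add_mem _ ha hb
  zero_mem' := by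
    simp only [Set.mem_setOf_eq, ZeroMemClass.coe_zero]
    exact Submodule.zero_mem _
  smul_mem' := by
    intro c x hx
    simp only [Set.mem_setOf_eq] at *
    rw [smul_eq_mul, MulMemClass.coe_mul]
    exact c.2 _ hx

/-- The Kaplansky transform `Ω(I) = {u ∈ K : ∀ a ∈ I, ∃ n ≥ 1, u aⁿ ∈ R}`, as an
overring of `R`. -/
def kaplansky (I : Ideal R) : Subalgebra R K where
  carrier := {u : K | ∀ a ∈ I, ∃ n : ℕ, 0 < n ∧
    ∃ r : R, u * (algebraMap R K a) ^ n = algebraMap R K r}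
  mul_mem' := by
    intro u v hu hv a ha
    obtain ⟨n, hn, r, hr⟩ := hu a ha
    obtain ⟨m, hm, s, hs⟩ := hv a ha
    refine ⟨n + m, by omega, r * s, ?_⟩
    rw [map_mul, ← hr, ← hs, pow_add]
    ring
  one_mem' := by
    intro a ha
    exact ⟨1, one_pos, a, by rw [pow_one, one_mul]⟩
  add_mem' := by
    intro u v hu hv a ha
    obtain ⟨n, hn, r, hr⟩ := hu a ha
    obtain ⟨m, hm, s, hs⟩ := hv a ha
    refine ⟨n + m, by omega, r * a ^ m + s * a ^ n, ?_⟩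
    rw [map_add, map_mul, map_mul, map_pow, map_pow, ← hr, ← hs, pow_add, add_mul]
    ring
  zero_mem' := by
    intro a ha
    exact ⟨1, one_pos, 0, by rw [map_zero, zero_mul]⟩
  algebraMap_mem' := by
    intro r a ha
    exact ⟨1, one_pos, r * a, by rw [map_mul, pow_one]⟩

/-- The Nagata (ideal) transform `T(I) = ⋃_{n ≥ 1} (R : Iⁿ)`, as an overring of `R`. -/
def nagata (I : Ideal R) : Subalgebra R K where
  carrier := {x : K | ∃ n : ℕ, ∀ y ∈ I ^ (n + 1),
    ∃ r : R, x * algebraMap R K y = algebraMap R K r}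
  mul_mem' := by
    intro x x' hx hx'
    obtain ⟨n, hn⟩ := hx
    obtain ⟨m, hm⟩ := hx'
    refine ⟨n + m + 1, fun y hy => ?_⟩
    rw [show n + m + 1 + 1 = (n + 1) + (m + 1) by omega, pow_add] at hy
    refine Submodule.mul_induction_on hy ?_ ?_
    · intro a ha b hb
      obtain ⟨r, hr⟩ := hn a ha
      obtain ⟨s, hs⟩ := hm b hb
      refine ⟨r * s, ?_⟩
      rw [map_mul, map_mul, ← hr, ← hs]
      ring
    · rintro y1 y2 ⟨r1, h1⟩ ⟨r2, h2⟩
      exact ⟨r1 + r2, by rw [map_add, map_add, mul_add, h1, h2]⟩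
  one_mem' := ⟨0, fun y _ => ⟨y, by rw [one_mul]⟩⟩
  add_mem' := by
    intro x x' hx hx'
    obtain ⟨n, hn⟩ := hx
    obtain ⟨m, hm⟩ := hx'
    refine ⟨n + m + 1, fun y hy => ?_⟩
    have h1 : y ∈ I ^ (n + 1) := Ideal.pow_le_pow_right (by omega) hy
    have h2 : y ∈ I ^ (m + 1) := Ideal.pow_le_pow_right (by omega) hy
    obtain ⟨r, hr⟩ := hn y h1
    obtain ⟨s, hs⟩ := hm y h2
    exact ⟨r + s, by rw [map_add, add_mul, hr, hs]⟩
  zero_mem' := ⟨0, fun y _ => ⟨0, by rw [map_zero, zero_mul]⟩⟩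
  algebraMap_mem' := by
    intro r
    exact ⟨0, fun y _ => ⟨r * y, by rw [map_mul]⟩⟩

end Overring

/-!
Let `P = √I`, a prime `t`-ideal. As `Spec_t(R)` is Noetherian, there is a finitely generated
`G ⊆ P` with `G ⊄ I` such that every `t`-ideal containing `G` has radical containing `P`.
For a prime `t`-ideal `M` the ring `R_M` is a valuation domain, and comparing `I R_M` with `G R_M`
shows `G⁻¹ I ⊆ R_M` for all such `M`, whence `G⁻¹ ⊆ I⁻¹`. Since `G` is `t`-invertible,
`G G⁻¹ ⊄ P`: there are `w ∈ G` and `z ∈ G⁻¹ ⊆ I⁻¹` with `q = w z ∈ R ∖ P`. If `I⁻¹` were a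
ring, then `z ^ (N + 1) w ^ N ∈ R` whenever `w ^ N ∈ I`, so
`q ^ (N + 1) = w · z ^ (N + 1) w ^ N ∈ P`, a contradiction.
-/

section VOperation

variable {A : Type*} [CommRing A] {K : Type*} [Field K] [Algebra A K]

lemma one_div_le_one_div {N L : Submodule A K} (h : N ≤ L) : 1 / L ≤ 1 / N :=
  Submodule.le_div_iff_mul_le.mpr <| (mul_le_mul_right h _).trans <| by
    rw [mul_comm]; exact Submodule.mul_one_div_le_one

lemma le_vOp (N : Submodule A K) : N ≤ vOp N :=
  Submodule.le_div_iff_mul_le.mpr Submodule.mul_one_div_le_one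

lemma vOp_mono {N L : Submodule A K} (h : N ≤ L) : vOp N ≤ vOp L :=
  one_div_le_one_div (one_div_le_one_div h)

lemma vOp_vOp (N : Submodule A K) : vOp (vOp N) = vOp N :=
  le_antisymm (one_div_le_one_div (le_vOp (1 / N))) (le_vOp _)

lemma vOp_one : vOp (1 : Submodule A K) = 1 := by
  have h : (1 : Submodule A K) / 1 = 1 :=
    le_antisymm (by simpa using Submodule.le_div_iff_mul_le.mp (le_refl ((1 : Submodule A K) / 1)))
      (Submodule.le_div_iff_mul_le.mpr (mul_one 1).le)
  rw [vOp, h, h]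

lemma vOp_le_one {N : Submodule A K} (h : N ≤ 1) : vOp N ≤ 1 :=
  (vOp_mono h).trans vOp_one.le

lemma vOp_mul_le (N L : Submodule A K) : vOp N * L ≤ vOp (N * L) := by
  have hL : L * (1 / (N * L)) ≤ 1 / N := by
    rw [Submodule.le_div_iff_mul_le, mul_right_comm, mul_comm L N]
    exact Submodule.mul_one_div_le_one
  rw [vOp, vOp, Submodule.le_div_iff_mul_le, mul_assoc]
  calc 1 / (1 / N) * (L * (1 / (N * L))) ≤ 1 / (1 / N) * (1 / N) := mul_le_mul_right hL _
    _ ≤ 1 := by rw [mul_comm]; exact Submodule.mul_one_div_le_one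

lemma vOp_mul_vOp_le (N L : Submodule A K) : vOp N * vOp L ≤ vOp (N * L) :=
  calc vOp N * vOp L ≤ vOp (N * vOp L) := vOp_mul_le _ _
    _ = vOp (vOp L * N) := by rw [mul_comm]
    _ ≤ vOp (vOp (L * N)) := vOp_mono (vOp_mul_le _ _)
    _ = vOp (N * L) := by rw [vOp_vOp, mul_comm]

lemma vOp_pow_le (N : Submodule A K) (n : ℕ) : vOp N ^ n ≤ vOp (N ^ n) := by
  induction n with
  | zero => exact le_vOp 1
  | succ n ih =>
    rw [pow_succ, pow_succ]
    exact (mul_le_mul_left ih _).trans (vOp_mul_vOp_le _ _)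

lemma vOp_le_tOp {J N : Submodule A K} (hJ : J ≠ ⊥) (hfg : J.FG) (hle : J ≤ N) :
    vOp J ≤ tOp N :=
  le_sSup ⟨J, hJ, hfg, hle, rfl⟩

lemma tOp_le {N L : Submodule A K}
    (h : ∀ J : Submodule A K, J ≠ ⊥ → J.FG → J ≤ N → vOp J ≤ L) : tOp N ≤ L :=
  sSup_le <| by rintro _ ⟨J, hJ, hfg, hle, rfl⟩; exact h J hJ hfg hle

lemma le_tOp (N : Submodule A K) : N ≤ tOp N := by
  intro x hx
  rcases eq_or_ne x 0 with rfl | hx0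
  · exact zero_mem _
  exact vOp_le_tOp (by simpa using hx0) (Submodule.fg_span_singleton x)
    ((Submodule.span_singleton_le_iff_mem _ _).mpr hx)
    (le_vOp _ (Submodule.mem_span_singleton_self x))

lemma tOp_mono {N L : Submodule A K} (h : N ≤ L) : tOp N ≤ tOp L :=
  tOp_le fun _ hJ hfg hle => vOp_le_tOp hJ hfg (hle.trans h)

lemma tOp_one_le : tOp (1 : Submodule A K) ≤ 1 :=
  tOp_le fun _ _ _ hle => vOp_le_one hle

end VOperation

section TIdeals

variable {R : Type*} [CommRing R] {K : Type*} [Field K] [Algebra R K]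

lemma mem_toK {I : Ideal R} {x : K} : x ∈ toK R K I ↔ ∃ a ∈ I, algebraMap R K a = x := by
  simp [toK]

lemma toK_le_one (I : Ideal R) : toK R K I ≤ 1 := by
  rw [Submodule.one_eq_range]
  exact LinearMap.map_le_range

lemma toK_pow (I : Ideal R) (n : ℕ) : toK R K (I ^ n) = toK R K I ^ n :=
  Submodule.map_pow I (Algebra.ofId R K) n

lemma toK_mono {I J : Ideal R} (h : I ≤ J) : toK R K I ≤ toK R K J :=
  Submodule.map_mono h

lemma mem_one_of_mem_dual {J : Ideal R} {z : K} (hz : z ∈ dual (toK R K J)) {w : R}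
    (hw : w ∈ J) : algebraMap R K w * z ∈ (1 : Submodule R K) := by
  rw [mul_comm]
  exact Submodule.mem_div_iff_forall_mul_mem.mp hz _ (mem_toK.mpr ⟨w, hw, rfl⟩)

variable (K) in
def tHull (H : Ideal R) : Ideal R := sInf {J | IsTIdeal K J ∧ H ≤ J}

lemma le_tHull (H : Ideal R) : H ≤ tHull K H :=
  le_sInf fun _ hJ => hJ.2

lemma tHull_le {H M : Ideal R} (hM : IsTIdeal K M) (h : H ≤ M) : tHull K H ≤ M :=
  sInf_le ⟨hM, h⟩

lemma tHull_mono {H H' : Ideal R} (h : H ≤ H') : tHull K H ≤ tHull K H' :=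
  sInf_le_sInf fun _ hJ => ⟨hJ.1, h.trans hJ.2⟩

variable [IsFractionRing R K]

lemma algebraMap_mem_toK {I : Ideal R} {a : R} : algebraMap R K a ∈ toK R K I ↔ a ∈ I := by
  simp [mem_toK, (IsFractionRing.injective R K).eq_iff]

lemma toK_le_toK {I J : Ideal R} : toK R K I ≤ toK R K J ↔ I ≤ J :=
  ⟨fun h _ ha => algebraMap_mem_toK.mp (h (algebraMap_mem_toK.mpr ha)), toK_mono⟩

lemma exists_fg_toK_eq {F : Submodule R K} (hF : F.FG) (h : F ≤ 1) :
    ∃ J : Ideal R, J.FG ∧ toK R K J = F := by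
  rw [Submodule.one_eq_range] at h
  have hmap := Submodule.map_comap_eq_self h
  exact ⟨_, Submodule.fg_of_fg_map_injective _ (IsFractionRing.injective R K) (hmap ▸ hF), hmap⟩

lemma isTIdeal_radical {I : Ideal R} (hI : IsTIdeal K I) : IsTIdeal K I.radical := by
  refine le_antisymm (tOp_le fun F hF0 hFfg hFle x hx => ?_) (le_tOp _)
  obtain ⟨J, hJfg, rfl⟩ := exists_fg_toK_eq hFfg (hFle.trans (toK_le_one _))
  obtain ⟨n, hn⟩ := Ideal.exists_pow_le_of_le_radical_of_fg (toK_le_toK.mp hFle) hJfg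
  obtain ⟨r, rfl⟩ := Submodule.mem_one.mp (vOp_le_one (toK_le_one J) hx)
  have hJn : toK R K (J ^ n) ≠ ⊥ := by
    rw [toK_pow, ← Submodule.zero_eq_bot]
    exact pow_ne_zero n (by rwa [Submodule.zero_eq_bot])
  refine algebraMap_mem_toK.mpr ⟨n, (algebraMap_mem_toK (K := K)).mp ?_⟩
  have hxn : algebraMap R K (r ^ n) ∈ vOp (toK R K (J ^ n)) := by
    rw [map_pow, toK_pow]
    exact vOp_pow_le _ n (Submodule.pow_mem_pow _ hx n)
  exact (vOp_le_tOp hJn (by rw [toK_pow]; exact hFfg.pow n) (toK_mono hn)).trans hI.le hxn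

lemma isTIdeal_sSup {c : Set (Ideal R)} (hc : ∀ J ∈ c, IsTIdeal K J) (hne : c.Nonempty)
    (hdir : DirectedOn (· ≤ ·) c) : IsTIdeal K (sSup c) := by
  refine le_antisymm (tOp_le fun F hF0 hFfg hFle => ?_) (le_tOp _)
  obtain ⟨J, hJfg, rfl⟩ := exists_fg_toK_eq hFfg (hFle.trans (toK_le_one _))
  obtain ⟨J', hJ'c, hJJ'⟩ := (CompleteLattice.isCompactElement_iff_le_of_directed_sSup_le _ _).mp
    ((Submodule.fg_iff_compact _).mp hJfg) c hne hdir (toK_le_toK.mp hFle)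
  calc vOp (toK R K J) ≤ tOp (toK R K J') := vOp_le_tOp hF0 hFfg (toK_mono hJJ')
    _ = toK R K J' := hc J' hJ'c
    _ ≤ toK R K (sSup c) := toK_mono (le_sSup hJ'c)

lemma isTIdeal_sInf {c : Set (Ideal R)} (hc : ∀ J ∈ c, IsTIdeal K J) : IsTIdeal K (sInf c) := by
  refine le_antisymm (tOp_le fun F hF0 hFfg hFle x hx => ?_) (le_tOp _)
  obtain ⟨r, rfl⟩ := Submodule.mem_one.mp (vOp_le_one (hFle.trans (toK_le_one _)) hx)
  refine algebraMap_mem_toK.mpr (Ideal.mem_sInf.mpr fun J hJ => (algebraMap_mem_toK (K := K)).mp ?_)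
  rw [← hc J hJ]
  exact vOp_le_tOp hF0 hFfg (hFle.trans (toK_mono (sInf_le hJ))) hx

lemma isTIdeal_tHull (H : Ideal R) : IsTIdeal K (tHull K H) :=
  isTIdeal_sInf fun _ hJ => hJ.1

/-- The conductor `(N :_R x) = {r ∈ R | r x ∈ N}`, for `t`-closed `N`. -/
lemma isTIdeal_comap_toSpanSingleton {N : Submodule R K} (hN : tOp N ≤ N) (x : K) :
    IsTIdeal K (N.comap (LinearMap.toSpanSingleton R K x)) := by
  refine le_antisymm (tOp_le fun F hF0 hFfg hFle y hy => ?_) (le_tOp _)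
  obtain ⟨r, rfl⟩ := Submodule.mem_one.mp (vOp_le_one (hFle.trans (toK_le_one _)) hy)
  refine algebraMap_mem_toK.mpr ?_
  rw [Submodule.mem_comap, LinearMap.toSpanSingleton_apply, Algebra.smul_def]
  rcases eq_or_ne x 0 with rfl | hx
  · simp
  have hFx : F * Submodule.span R {x} ≤ N := Submodule.mul_le.mpr fun a ha b hb => by
    obtain ⟨t, rfl⟩ := Submodule.mem_span_singleton.mp hb
    obtain ⟨c, hc, rfl⟩ := mem_toK.mp (hFle ha)
    rw [mul_smul_comm, ← Algebra.smul_def]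
    exact N.smul_mem t hc
  have hFx0 : F * Submodule.span R {x} ≠ ⊥ := by
    rw [← Submodule.zero_eq_bot] at hF0 ⊢
    exact mul_ne_zero hF0 (by simpa [Submodule.zero_eq_bot] using hx)
  exact hN (vOp_le_tOp hFx0 (hFfg.mul (Submodule.fg_span_singleton x)) hFx
    (vOp_mul_le F _ (Submodule.mul_mem_mul hy (Submodule.mem_span_singleton_self x))))

/-- A `t`-ideal maximal among proper `t`-ideals is prime: for `a ∉ M` the conductor
`(M :_R a)` is a proper `t`-ideal containing `M`. -/
lemma exists_le_isPrime_isTIdeal {D : Ideal R} (hD : IsTIdeal K D) (hD1 : D ≠ ⊤) :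
    ∃ M, D ≤ M ∧ M.IsPrime ∧ IsTIdeal K M := by
  have hchain : ∀ c ⊆ {J : Ideal R | IsTIdeal K J ∧ J ≠ ⊤}, IsChain (· ≤ ·) c →
      ∀ J ∈ c, ∃ ub ∈ {J : Ideal R | IsTIdeal K J ∧ J ≠ ⊤}, ∀ J' ∈ c, J' ≤ ub := by
    intro c hc hc' J hJ
    refine ⟨sSup c, ⟨isTIdeal_sSup (fun J hJ => (hc hJ).1) ⟨J, hJ⟩ hc'.directedOn, fun htop => ?_⟩,
      fun _ => le_sSup⟩
    obtain ⟨J', hJ'c, hJ'⟩ := (Submodule.mem_sSup_of_directed ⟨J, hJ⟩ hc'.directedOn).mp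
      (htop ▸ Submodule.mem_top : (1 : R) ∈ sSup c)
    exact (hc hJ'c).2 ((Ideal.eq_top_iff_one J').mpr hJ')
  obtain ⟨M, hDM, hM⟩ := zorn_le_nonempty₀ _ hchain D ⟨hD, hD1⟩
  refine ⟨M, hDM, ⟨hM.prop.2, fun {a b} hab => or_iff_not_imp_left.mpr fun ha => ?_⟩, hM.prop.1⟩
  set C := (toK R K M).comap (LinearMap.toSpanSingleton R K (algebraMap R K a))
  have hmemC : ∀ r, r ∈ C ↔ r * a ∈ M := fun r => by
    rw [Submodule.mem_comap, LinearMap.toSpanSingleton_apply, Algebra.smul_def, ← map_mul,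
      algebraMap_mem_toK]
  have hMC : M ≤ C := fun m hm => (hmemC m).mpr (M.mul_mem_right a hm)
  have hC : C ≠ ⊤ := fun h => ha (by simpa using (hmemC 1).mp (h ▸ Submodule.mem_top))
  have hCM := hM.eq_of_le ⟨isTIdeal_comap_toSpanSingleton hM.prop.1.le _, hC⟩ hMC
  exact hCM ▸ (hmemC b).mpr (by rwa [mul_comm])

end TIdeals

section Noetherian

variable {R : Type*} [CommRing R] {K : Type*} [Field K] [Algebra R K]

lemma TSpecNoetherian.wellFoundedGT (hN : TSpecNoetherian R K) :
    WellFoundedGT {Q : Ideal R // IsTIdeal K Q ∧ Q.radical = Q} := by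
  rw [wellFoundedGT_iff_monotone_chain_condition]
  intro f
  obtain ⟨n, hn⟩ := hN ((OrderHom.Subtype.val _).comp f) fun n => (f n).2
  exact ⟨n, fun m hm => Subtype.ext (hn m hm).symm⟩

variable [IsFractionRing R K]

lemma TSpecNoetherian.exists_fg_le_radical_tHull (hN : TSpecNoetherian R K) (P : Ideal R) :
    ∃ G : Ideal R, G.FG ∧ G ≤ P ∧ P ≤ (tHull K G).radical := by
  let Q (G : Ideal R) : {Q : Ideal R // IsTIdeal K Q ∧ Q.radical = Q} :=
    ⟨(tHull K G).radical, isTIdeal_radical (isTIdeal_tHull G), Ideal.radical_idem _⟩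
  obtain ⟨_, ⟨G, ⟨hGfg, hGP⟩, rfl⟩, hmax⟩ := hN.wellFoundedGT.wf.has_min
    (Q '' {G | G.FG ∧ G ≤ P}) ⟨_, ⊥, ⟨Submodule.fg_bot, bot_le⟩, rfl⟩
  refine ⟨G, hGfg, hGP, fun x hx => ?_⟩
  set G' := G ⊔ Ideal.span {x}
  have hG' : G' ∈ {G | G.FG ∧ G ≤ P} :=
    ⟨Submodule.FG.sup hGfg (Submodule.fg_span_singleton x),
      sup_le hGP ((Ideal.span_singleton_le_iff_mem _).mpr hx)⟩
  have hQ : Q G ≤ Q G' := Ideal.radical_mono (tHull_mono le_sup_left)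
  have hQ' : Q G' = Q G := ((hQ.lt_or_eq).resolve_left (hmax _ ⟨G', hG', rfl⟩)).symm
  have hxG' : x ∈ (Q G').1 :=
    Ideal.le_radical (le_tHull _ (Ideal.mem_sup_right (Ideal.mem_span_singleton_self x)))
  rwa [hQ'] at hxG'

end Noetherian

section PVMD

variable {R : Type*} [CommRing R] {K : Type*} [Field K] [Algebra R K] [IsFractionRing R K]

lemma IsTInvertible.exists_mul_notMem {J P : Ideal R} (hJ : IsTInvertible K J)
    (hP : IsTIdeal K P) (hP1 : P ≠ ⊤) :
    ∃ w ∈ J, ∃ z ∈ dual (toK R K J), algebraMap R K w * z ∉ toK R K P := by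
  by_contra! h
  have hle : toK R K J * dual (toK R K J) ≤ toK R K P := Submodule.mul_le.mpr fun x hx z hz => by
    obtain ⟨w, hw, rfl⟩ := mem_toK.mp hx
    exact h w hw z hz
  have h1 : algebraMap R K 1 ∈ toK R K P := by
    rw [map_one, ← Submodule.one_le, ← hJ]
    exact (tOp_mono hle).trans hP.le
  exact hP1 ((Ideal.eq_top_iff_one P).mpr (algebraMap_mem_toK.mp h1))

lemma algebraMap_dvd_of_mul_eq (M : Ideal R) [M.IsPrime] {a b σ τ : R} {z : K} (hσ : σ ∉ M)
    (ha : algebraMap R K a * z = algebraMap R K σ) (hb : algebraMap R K b * z = algebraMap R K τ) :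
    algebraMap R (Localization.AtPrime M) a ∣ algebraMap R (Localization.AtPrime M) b := by
  have h : σ * b = a * τ := IsFractionRing.injective R K <| by
    rw [map_mul, map_mul, ← ha, ← hb]; ring
  refine ((IsLocalization.AtPrime.isUnit_to_map_iff _ M σ).mpr hσ).dvd_mul_left.mp
    ⟨algebraMap R _ τ, ?_⟩
  rw [← map_mul, h, map_mul]

/-- By `t`-invertibility `(a, b)(a, b)⁻¹ ⊄ M`, so some `z ∈ (a, b)⁻¹` has `a z ∉ M` or `b z ∉ M`;
then `a z` or `b z` is a unit of `R_M`. -/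
lemma IsPVMD.algebraMap_dvd_total (hR : IsPVMD R K) (M : Ideal R) [hM : M.IsPrime]
    (hMt : IsTIdeal K M) (a b : R) :
    algebraMap R (Localization.AtPrime M) a ∣ algebraMap R _ b ∨
      algebraMap R (Localization.AtPrime M) b ∣ algebraMap R _ a := by
  rcases eq_or_ne a 0 with rfl | ha
  · exact Or.inr (by simp)
  have haJ : a ∈ Ideal.span {a, b} := Ideal.subset_span (by simp)
  have hbJ : b ∈ Ideal.span {a, b} := Ideal.subset_span (by simp)
  obtain ⟨w, hw, z, hz, hwz⟩ := (hR (Ideal.span {a, b}) (fun h => ha (by simpa [h] using haJ))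
    ⟨{a, b}, by simp⟩).exists_mul_notMem hMt hM.ne_top
  obtain ⟨σ, hσ⟩ := Submodule.mem_one.mp (mem_one_of_mem_dual hz haJ)
  obtain ⟨τ, hτ⟩ := Submodule.mem_one.mp (mem_one_of_mem_dual hz hbJ)
  obtain ⟨u, v, rfl⟩ := Ideal.mem_span_pair.mp hw
  have huv : u * σ + v * τ ∉ M := fun h => hwz <| by
    rw [← algebraMap_mem_toK (K := K)] at h
    convert h using 1
    simp only [map_add, map_mul, hσ, hτ]
    ring
  by_cases hσM : σ ∈ M
  · have hτM : τ ∉ M := fun h => huv (add_mem (M.mul_mem_left u hσM) (M.mul_mem_left v h))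
    exact Or.inr (algebraMap_dvd_of_mul_eq M hτM hτ.symm hσ.symm)
  · exact Or.inl (algebraMap_dvd_of_mul_eq M hσM hσ.symm hτ.symm)

lemma IsSubringOf.mem_radical_of_algebraMap_eq {I : Ideal R}
    (hI : IsSubringOf (dual (toK R K I))) {z : K} (hz : z ∈ dual (toK R K I)) {w q : R}
    (hw : w ∈ I.radical) (hq : algebraMap R K q = algebraMap R K w * z) : q ∈ I.radical := by
  have hpow : ∀ n : ℕ, z ^ n ∈ dual (toK R K I) := fun n => by
    induction n with
    | zero => simpa using hI.1
    | succ n ih => rw [pow_succ]; exact hI.2 _ ih _ hz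
  obtain ⟨N, hN⟩ := Ideal.mem_radical_iff.mp hw
  obtain ⟨ρ, hρ⟩ := Submodule.mem_one.mp (mem_one_of_mem_dual (hpow (N + 1)) hN)
  -- `(w z) ^ (N + 1) = w · (w ^ N z ^ (N + 1))`
  have hqN : q ^ (N + 1) = w * ρ := IsFractionRing.injective R K <| by
    rw [map_pow, hq, map_mul, hρ, map_pow]; ring
  rw [← Ideal.radical_idem]
  exact ⟨N + 1, hqN ▸ I.radical.mul_mem_right ρ hw⟩

variable [IsDomain R]

/-- One half of Griffin's characterization of PVMDs. -/
theorem IsPVMD.valuationRing_localization (hR : IsPVMD R K) (M : Ideal R) [M.IsPrime]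
    (hMt : IsTIdeal K M) : ValuationRing (Localization.AtPrime M) := by
  refine ValuationRing.iff_dvd_total.mpr ⟨fun x y => ?_⟩
  obtain ⟨⟨a, s⟩, rfl⟩ := IsLocalization.mk'_surjective M.primeCompl x
  obtain ⟨⟨b, t⟩, rfl⟩ := IsLocalization.mk'_surjective M.primeCompl y
  have hu (u : M.primeCompl) : IsUnit (IsLocalization.mk' (Localization.AtPrime M) (1 : R) u) :=
    IsUnit.of_mul_eq_one (algebraMap R _ u) (by rw [IsLocalization.mk'_spec, map_one])
  simp only [IsLocalization.mk'_eq_mul_mk'_one a, IsLocalization.mk'_eq_mul_mk'_one b,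
    (hu s).mul_right_dvd, (hu t).mul_right_dvd, (hu s).dvd_mul_right, (hu t).dvd_mul_right]
  exact hR.algebraMap_dvd_total M hMt a b

/-- For `z ∈ J⁻¹` and `i ∈ I`, a prime `t`-ideal `M` containing the conductor of `z i` would
contain some `s` with `s i ∈ J`: if `√I ⊄ M` take `s ∈ J ∖ M`; otherwise compare `I R_M` and
`J R_M` in the valuation ring `R_M`. -/
theorem IsPVMD.dual_le_dual (hR : IsPVMD R K) {I J : Ideal R} (hI : I.IsPrimary) (hJI : ¬J ≤ I)
    (hJ : ∀ M : Ideal R, M.IsPrime → IsTIdeal K M → J ≤ M → I.radical ≤ M) :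
    dual (toK R K J) ≤ dual (toK R K I) := by
  intro z hz
  refine Submodule.mem_div_iff_forall_mul_mem.mpr fun y hy => ?_
  obtain ⟨i, hi, rfl⟩ := mem_toK.mp hy
  by_contra hzi
  set D := (1 : Submodule R K).comap (LinearMap.toSpanSingleton R K (z * algebraMap R K i))
  have hmemD (s : R) : s ∈ D ↔ algebraMap R K (s * i) * z ∈ (1 : Submodule R K) := by
    have : algebraMap R K s * (z * algebraMap R K i) = algebraMap R K (s * i) * z := by
      rw [map_mul]; ring
    rw [Submodule.mem_comap, LinearMap.toSpanSingleton_apply, Algebra.smul_def, this]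
  have hD1 : D ≠ ⊤ := fun h => hzi <| by
    simpa [mul_comm] using (hmemD 1).mp (h ▸ Submodule.mem_top)
  obtain ⟨M, hDM, hM, hMt⟩ :=
    exists_le_isPrime_isTIdeal (isTIdeal_comap_toSpanSingleton tOp_one_le _) hD1
  suffices ∃ s ∉ M, s * i ∈ J by
    obtain ⟨s, hsM, hs⟩ := this
    exact hsM (hDM ((hmemD s).mpr (mem_one_of_mem_dual hz hs)))
  by_cases hIM : I.radical ≤ M
  · have := hR.valuationRing_localization M hMt
    rcases (ValuationRing.le_total_ideal _).total (I.map (algebraMap R (Localization.AtPrime M)))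
      (J.map (algebraMap R _)) with h | h
    · exact (IsLocalization.algebraMap_mem_map_algebraMap_iff M.primeCompl _ J i).mp
        (h (Ideal.mem_map_of_mem _ hi))
    · refine absurd (fun w hw => ?_) hJI
      obtain ⟨s, hsM, hs⟩ := (IsLocalization.algebraMap_mem_map_algebraMap_iff M.primeCompl _ I
        w).mp (h (Ideal.mem_map_of_mem _ hw))
      exact ((Ideal.isPrimary_iff.mp hI).2 (mul_comm s w ▸ hs)).resolve_right
        fun h' => hsM (hIM h')
  · obtain ⟨s, hsJ, hsM⟩ := SetLike.not_le_iff_exists.mp (mt (hJ M hM hMt) hIM)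
    exact ⟨s, hsM, J.mul_mem_right i hsJ⟩

end PVMD

section Statements

variable {R : Type*} [CommRing R] [IsDomain R]
variable {K : Type*} [Field K] [Algebra R K] [IsFractionRing R K]

theorem statement_10_general (hR : IsPVMD R K) (hN : TSpecNoetherian R K)
    (I : Ideal R) (htI : IsTIdeal K I)
    (hprim : I.IsPrimary) (hnp : ¬ I.IsPrime) :
    ¬ IsSubringOf (dual (toK R K I)) := by
  intro hsub
  obtain ⟨c, hcP, hcI⟩ := SetLike.not_le_iff_exists.mp fun h : I.radical ≤ I =>
    hnp (le_antisymm h Ideal.le_radical ▸ Ideal.isPrime_radical hprim)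
  obtain ⟨H, hHfg, hHP, hPH⟩ := hN.exists_fg_le_radical_tHull I.radical
  set G := H ⊔ Ideal.span {c}
  have hGP : G ≤ I.radical := sup_le hHP ((Ideal.span_singleton_le_iff_mem _).mpr hcP)
  have hGI : ¬G ≤ I := fun h => hcI (h (Ideal.mem_sup_right (Ideal.mem_span_singleton_self c)))
  have hGM (M : Ideal R) (hM : M.IsPrime) (hMt : IsTIdeal K M) (hle : G ≤ M) : I.radical ≤ M :=
    hPH.trans (hM.radical ▸ Ideal.radical_mono (tHull_le hMt (le_sup_left.trans hle)))
  have hGt : IsTInvertible K G :=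
    hR G (fun h => hGI (h ▸ bot_le)) (Submodule.FG.sup hHfg (Submodule.fg_span_singleton c))
  obtain ⟨w, hwG, z, hz, hwz⟩ :=
    hGt.exists_mul_notMem (isTIdeal_radical htI) (Ideal.isPrime_radical hprim).ne_top
  obtain ⟨q, hq⟩ := Submodule.mem_one.mp (mem_one_of_mem_dual hz hwG)
  refine hwz (hq ▸ algebraMap_mem_toK.mpr ?_)
  exact hsub.mem_radical_of_algebraMap_eq (hR.dual_le_dual hprim hGI hGM hz) (hGP hwG) hq

/-- Let `R` be a PVMD with `Spec_t(R)` Noetherian and `I` a `t`-ideal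
of `R`. If `I` is primary but not prime, then `I⁻¹` is not a subring of `K`. -/
theorem statement_10 (hR : IsPVMD R K) (hN : TSpecNoetherian R K)
    (I : Ideal R) (hbot : I ≠ ⊥) (htop : I ≠ ⊤) (htI : IsTIdeal K I)
    (hprim : I.IsPrimary) (hnp : ¬ I.IsPrime) :
    ¬ IsSubringOf (dual (toK R K I)) :=
  statement_10_general hR hN I htI hprim hnp

end Statements

end

end PVMDPaper
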